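/- Continuous-time stochastic fictitious play is ε-Hannan consistent with ε ≤ λ·(max_p H(p) − min_p H(p)) = λ·log|A|: under the setup of CSFP (b_t the entropy-regularized best response to the running average reward), the unregularized regret satisfies max_p ∫_0^T ⟨p, r_s⟩ ds − ∫_0^T ⟨b_s, r_s⟩ ds ≤ C + T·λ·log|A| for a constant C independent of T. -/

import Mathlib

open Real BigOperators MeasureTheory intervalIntegral

def IsDist {A : Type*} [Fintype A] (p : A → ℝ) : Prop :=
  (∀ a, 0 ≤ p a) ∧ ∑ a, p a = 1

noncomputable def softmax {A : Type*} [Fintype A] (y : A → ℝ) : A → ℝ :=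
  fun a => Real.exp (y a) / ∑ b, Real.exp (y b)

/-!
Let `Y t = ∫₀ᵗ r` be the cumulative payoff vector and `Φ t = λt · log ∑ₐ exp (Yₐ t / (λt))` its
smoothed maximum at temperature `λt`, so that `bₜ` is the gradient of this smoothed maximum.
Then `maxₐ Yₐ T ≤ Φ T`, and differentiating the perspective function gives
`Φ' t = ⟨bₜ, rₜ⟩ + λ H(bₜ) ≤ ⟨bₜ, rₜ⟩ + λ log |A|`. Integrating over `[1, T]` bounds the regret;
the interval `[0, 1]` contributes only a constant since the payoffs are bounded.
-/

open Finset

noncomputable def logSumExp {A : Type*} [Fintype A] (y : A → ℝ) : ℝ :=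
  log (∑ a, exp (y a))

noncomputable def shannonEntropy {A : Type*} [Fintype A] (p : A → ℝ) : ℝ :=
  ∑ a, negMulLog (p a)

noncomputable def smoothMax {A : Type*} [Fintype A] (τ : ℝ) (y : A → ℝ) : ℝ :=
  τ * logSumExp (fun a => τ⁻¹ * y a)

section LogSumExp

variable {A : Type*} [Fintype A]

lemma sum_exp_pos [Nonempty A] (y : A → ℝ) : 0 < ∑ a, exp (y a) :=
  sum_pos (fun _ _ => exp_pos _) univ_nonempty

lemma softmax_pos [Nonempty A] (y : A → ℝ) (a : A) : 0 < softmax y a :=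
  div_pos (exp_pos _) (sum_exp_pos y)

lemma sum_softmax [Nonempty A] (y : A → ℝ) : ∑ a, softmax y a = 1 := by
  simp only [softmax, ← sum_div]
  exact div_self (sum_exp_pos y).ne'

lemma log_softmax [Nonempty A] (y : A → ℝ) (a : A) :
    log (softmax y a) = y a - logSumExp y := by
  rw [softmax, log_div (exp_pos _).ne' (sum_exp_pos y).ne', log_exp, logSumExp]

lemma le_logSumExp (y : A → ℝ) (a : A) : y a ≤ logSumExp y := by
  rw [← log_exp (y a)]
  exact log_le_log (exp_pos _)
    (single_le_sum (f := fun a => exp (y a)) (fun a _ => (exp_pos _).le) (mem_univ a))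

lemma shannonEntropy_le_log_card {p : A → ℝ} (hpos : ∀ a, 0 < p a) (hsum : ∑ a, p a = 1) :
    shannonEntropy p ≤ log (Fintype.card A) := by
  have := strictConcaveOn_log_Ioi.concaveOn.le_map_sum (t := univ) (w := p)
    (p := fun a => (p a)⁻¹) (fun a _ => (hpos a).le) hsum (fun a _ => inv_pos.2 (hpos a))
  simpa [shannonEntropy, negMulLog, mul_inv_cancel₀ (hpos _).ne'] using this

lemma shannonEntropy_softmax [Nonempty A] (y : A → ℝ) :
    shannonEntropy (softmax y) = logSumExp y - ∑ a, softmax y a * y a := by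
  simp only [shannonEntropy, negMulLog, log_softmax, neg_mul, mul_sub, sum_neg_distrib,
    sum_sub_distrib, ← sum_mul, sum_softmax]
  ring

lemma hasDerivAt_logSumExp [Nonempty A] {v : ℝ → A → ℝ} {v' : A → ℝ} {t : ℝ}
    (hv : ∀ a, HasDerivAt (fun s => v s a) (v' a) t) :
    HasDerivAt (fun s => logSumExp (v s)) (∑ a, softmax (v t) a * v' a) t := by
  refine ((HasDerivAt.fun_sum fun a _ => (hv a).exp).log (sum_exp_pos (v t)).ne').congr_deriv ?_
  simp only [softmax, sum_div, div_mul_eq_mul_div]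

lemma le_smoothMax {τ : ℝ} (hτ : 0 < τ) (y : A → ℝ) (a : A) :
    y a ≤ smoothMax τ y := by
  have := mul_le_mul_of_nonneg_left (le_logSumExp (fun a => τ⁻¹ * y a) a) hτ.le
  rwa [mul_inv_cancel_left₀ hτ.ne'] at this

lemma hasDerivAt_smoothMax [Nonempty A] {c : ℝ → ℝ} {c' : ℝ}
    {Y : ℝ → A → ℝ} {Y' : A → ℝ} {t : ℝ} (hc : HasDerivAt c c' t) (hct : c t ≠ 0)
    (hY : ∀ a, HasDerivAt (fun s => Y s a) (Y' a) t) :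
    HasDerivAt (fun s => smoothMax (c s) (Y s))
      (c' * shannonEntropy (softmax fun a => (c t)⁻¹ * Y t a)
        + ∑ a, softmax (fun a => (c t)⁻¹ * Y t a) a * Y' a) t := by
  have h := hc.fun_mul (hasDerivAt_logSumExp fun a => (hc.fun_inv hct).fun_mul (hY a))
  refine h.congr_deriv ?_
  set b := softmax fun a => (c t)⁻¹ * Y t a
  have hterm : ∀ a, c t * (b a * (-c' / c t ^ 2 * Y t a + (c t)⁻¹ * Y' a))
      = -(c' * (b a * ((c t)⁻¹ * Y t a))) + b a * Y' a := by
    intro a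
    field_simp
  rw [shannonEntropy_softmax, mul_sum, sum_congr rfl fun a _ => hterm a, sum_add_distrib,
    sum_neg_distrib, ← mul_sum]
  ring

end LogSumExp

section IsDist

variable {A : Type*} [Fintype A] {p : A → ℝ}

lemma IsDist.sum_mul_le (hp : IsDist p) {x : A → ℝ} {m : ℝ} (hx : ∀ a, x a ≤ m) :
    ∑ a, p a * x a ≤ m :=
  calc ∑ a, p a * x a ≤ ∑ a, p a * m :=
        sum_le_sum fun a _ => mul_le_mul_of_nonneg_left (hx a) (hp.1 a)
    _ = m := by rw [← sum_mul, hp.2, one_mul]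

lemma IsDist.abs_sum_mul_le (hp : IsDist p) {x : A → ℝ} {M : ℝ} (hx : ∀ a, |x a| ≤ M) :
    |∑ a, p a * x a| ≤ M := by
  refine abs_le'.2 ⟨hp.sum_mul_le fun a => (abs_le'.1 (hx a)).1, ?_⟩
  rw [← sum_neg_distrib]
  simpa only [mul_neg] using hp.sum_mul_le fun a => (abs_le'.1 (hx a)).2

lemma isDist_uniform [Nonempty A] : IsDist fun _ : A => (Fintype.card A : ℝ)⁻¹ := by
  refine ⟨fun _ => by positivity, ?_⟩
  rw [sum_const, card_univ, nsmul_eq_mul, mul_inv_cancel₀ (by positivity)]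

end IsDist

lemma intervalIntegrable_of_abs_le {g : ℝ → ℝ} {M : ℝ} (hg : Measurable g) (hM : ∀ s, |g s| ≤ M)
    (t₀ t₁ : ℝ) : IntervalIntegrable g volume t₀ t₁ :=
  (intervalIntegrable_const (c := M)).mono_fun hg.aestronglyMeasurable.restrict
    (Filter.Eventually.of_forall fun s => (hM s).trans (le_abs_self M))

lemma sSup_integral_sum_mul_le {A : Type*} [Fintype A] [Nonempty A] {r : ℝ → A → ℝ}
    {t₀ t₁ m : ℝ} (hr : ∀ a, IntervalIntegrable (fun s => r s a) volume t₀ t₁)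
    (hm : ∀ a, ∫ s in t₀..t₁, r s a ≤ m) :
    sSup {x : ℝ | ∃ p : A → ℝ, IsDist p ∧ x = ∫ s in t₀..t₁, ∑ a, p a * r s a} ≤ m := by
  refine csSup_le ⟨_, _, isDist_uniform, rfl⟩ ?_
  rintro x ⟨p, hp, rfl⟩
  rw [integral_finsetSum fun a _ => (hr a).const_mul (p a)]
  simp_rw [intervalIntegral.integral_const_mul]
  exact hp.sum_mul_le hm

lemma smoothMax_sub_le_integral {A : Type*} [Fintype A] [Nonempty A] {Y r : ℝ → A → ℝ}
    {g : ℝ → ℝ} {lam T : ℝ} (hlam : 0 < lam) (hT : 1 ≤ T)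
    (hY : ∀ t a, HasDerivAt (fun s => Y s a) (r t a) t)
    (hg : ∀ t ≥ 1, g t = ∑ a, softmax (fun a => (lam * t)⁻¹ * Y t a) a * r t a)
    (hgint : IntervalIntegrable g volume 1 T) :
    smoothMax (lam * T) (Y T) - smoothMax lam (Y 1)
      ≤ (∫ s in (1:ℝ)..T, g s) + (T - 1) * (lam * log (Fintype.card A)) := by
  have hderiv : ∀ t, 1 ≤ t → HasDerivAt (fun s => smoothMax (lam * s) (Y s))
      (lam * shannonEntropy (softmax fun a => (lam * t)⁻¹ * Y t a) + g t) t := by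
    intro t ht
    rw [hg t ht]
    exact hasDerivAt_smoothMax (by simpa using (hasDerivAt_id' t).const_mul lam)
      (mul_pos hlam (by linarith)).ne' (hY t)
  have hle : ∀ t, 1 ≤ t → lam * shannonEntropy (softmax fun a => (lam * t)⁻¹ * Y t a) + g t
      ≤ g t + lam * log (Fintype.card A) := fun t _ => by
    have := shannonEntropy_le_log_card (softmax_pos fun a => (lam * t)⁻¹ * Y t a) (sum_softmax _)
    linarith [mul_le_mul_of_nonneg_left this hlam.le]
  have key := sub_le_integral_of_hasDeriv_right_of_le hT
    (fun t ht => (hderiv t ht.1).continuousAt.continuousWithinAt)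
    (fun t ht => (hderiv t ht.1.le).hasDerivWithinAt)
    ((intervalIntegrable_iff_integrableOn_Icc_of_le hT).1 (hgint.add intervalIntegrable_const))
    (fun t ht => hle t ht.1.le)
  rwa [integral_add hgint intervalIntegrable_const, intervalIntegral.integral_const, smul_eq_mul,
    mul_one] at key

/-- Continuous-time stochastic fictitious play is ε-Hannan consistent with
`ε ≤ λ log |A|`: the unregularized regret over `[0, T]` is at most `C + T λ log |A|`
for some constant `C` independent of `T`. -/
theorem csfp_eps_hannan_consistent {A : Type*} [Fintype A] [Nonempty A]
    (r : ℝ → A → ℝ)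
    (hrcont : ∀ a, Continuous (fun s => r s a))
    (hrbdd : ∃ M : ℝ, ∀ s a, |r s a| ≤ M)
    (lam : ℝ) (hlam : 0 < lam)
    (b : ℝ → A → ℝ)
    (hbmeas : ∀ a, Measurable (fun s => b s a))
    (hbdist : ∀ t, IsDist (b t))
    (hb : ∀ t ≥ (1:ℝ), b t = softmax (fun a => (1 / (lam * t)) * ∫ s in (0:ℝ)..t, r s a)) :
    ∃ C : ℝ, ∀ T ≥ (1:ℝ),
      sSup {x : ℝ | ∃ p : A → ℝ, IsDist p ∧ x = ∫ s in (0:ℝ)..T, ∑ a, p a * r s a}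
        - (∫ s in (0:ℝ)..T, ∑ a, b s a * r s a)
      ≤ C + T * lam * Real.log (Fintype.card A) := by
  obtain ⟨M, hM⟩ := hrbdd
  set Y : ℝ → A → ℝ := fun t a => ∫ s in (0:ℝ)..t, r s a
  set g : ℝ → ℝ := fun s => ∑ a, b s a * r s a
  have hY : ∀ t a, HasDerivAt (fun s => Y s a) (r t a) t := fun t a =>
    ((hrcont a).integral_hasStrictDerivAt 0 t).hasDerivAt
  have hgM : ∀ s, |g s| ≤ M := fun s => (hbdist s).abs_sum_mul_le (hM s)
  have hgint : ∀ t₀ t₁, IntervalIntegrable g volume t₀ t₁ := intervalIntegrable_of_abs_le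
    (Finset.measurable_sum _ fun a _ => (hbmeas a).mul (hrcont a).measurable) hgM
  have hg : ∀ t ≥ 1, g t = ∑ a, softmax (fun a => (lam * t)⁻¹ * Y t a) a * r t a :=
    fun t ht => by simp only [g, Y, hb t ht, one_div]
  refine ⟨smoothMax lam (Y 1) + M, fun T hT => ?_⟩
  have hsup := sSup_integral_sum_mul_le (fun a => (hrcont a).intervalIntegrable 0 T)
    (le_smoothMax (mul_pos hlam (by linarith)) (Y T))
  have hpot := smoothMax_sub_le_integral hlam hT hY hg (hgint 1 T)
  have hinit : -M ≤ ∫ s in (0:ℝ)..1, g s := by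
    have := norm_integral_le_of_norm_le_const (a := 0) (b := 1) fun s _ =>
      (Real.norm_eq_abs (g s)).trans_le (hgM s)
    rw [sub_zero, abs_one, mul_one, Real.norm_eq_abs] at this
    exact (abs_le.1 this).1
  have hlog : 0 ≤ lam * log (Fintype.card A) := mul_nonneg hlam.le (log_natCast_nonneg _)
  rw [← integral_add_adjacent_intervals (hgint 0 1) (hgint 1 T)]
  linarith
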